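/- arXiv:2205.15142 — 9 statements merged into one kernel-verified Lean document; each statement's English description precedes it below -/
import Mathlib

section
/- Let f : ℝ^d → ℝ be L-smooth and twice continuously differentiable, γ ≤ 1/(2L), and g(x) = x - γ∇f(x). For any measurable set Y ⊆ ℝ^d, the Lebesgue measure of the preimage satisfies ℒ(g^{-1}(Y)) ≤ 2^d · ℒ(Y). -/
open MeasureTheory
open scoped ENNReal NNReal

/-!
Since `γ • f'` is `γL`-Lipschitz with `γL ≤ 1/2`, the map `g x = x - γ • f' x` satisfies
`‖x - y‖ ≤ 2 ‖g x - g y‖`: it is injective and its inverse, on its range, is `2`-Lipschitz.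
Hence `g⁻¹(Y)` is the image of `Y ∩ range g` under a `2`-Lipschitz map. Lebesgue measure is a
multiple of the `d`-dimensional Hausdorff measure, and `K`-Lipschitz maps increase the latter by
at most the factor `K ^ d`.
-/

section AddHaar

variable {E : Type*} [NormedAddCommGroup E] [NormedSpace ℝ E] [FiniteDimensional ℝ E]
  [MeasurableSpace E] [BorelSpace E] (μ : Measure E) [μ.IsAddHaarMeasure] {K : ℝ≥0}

theorem LipschitzOnWith.addHaar_image_le {h : E → E} {s : Set E} (hh : LipschitzOnWith K h s) :
    μ (h '' s) ≤ (K : ℝ≥0∞) ^ Module.finrank ℝ E * μ s := by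
  rw [Measure.isAddLeftInvariant_eq_smul μ μH[Module.finrank ℝ E]]
  simp only [Measure.smul_apply, ENNReal.smul_def, smul_eq_mul]
  rw [mul_left_comm]
  gcongr
  simpa only [ENNReal.rpow_natCast] using hh.hausdorffMeasure_image_le (Nat.cast_nonneg _)

theorem AntilipschitzWith.addHaar_preimage_le {g : E → E} (hg : AntilipschitzWith K g)
    (Y : Set E) : μ (g ⁻¹' Y) ≤ (K : ℝ≥0∞) ^ Module.finrank ℝ E * μ Y := by
  have hinv : LipschitzOnWith K (Function.invFun g) (Set.range g) :=
    lipschitzOnWith_iff_restrict.mpr <| hg.to_rightInvOn fun y hy => Function.invFun_eq hy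
  calc μ (g ⁻¹' Y) = μ (Function.invFun g '' (g '' (g ⁻¹' Y))) := by
        rw [(Function.leftInverse_invFun hg.injective).image_image]
    _ ≤ K ^ Module.finrank ℝ E * μ (g '' (g ⁻¹' Y)) :=
        (hinv.mono (Set.image_subset_range _ _)).addHaar_image_le μ
    _ ≤ K ^ Module.finrank ℝ E * μ Y := by
        gcongr
        exact Set.image_preimage_subset g Y

end AddHaar

theorem LipschitzWith.antilipschitzWith_id_sub {E : Type*} [SeminormedAddCommGroup E]
    {K : ℝ≥0} {φ : E → E} (hφ : LipschitzWith K φ) (hK : K < 1) :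
    AntilipschitzWith (1 - K)⁻¹ fun x => x - φ x := by
  simpa only [inv_one, sub_eq_add_neg, id, Pi.neg_apply] using
    AntilipschitzWith.id.add_lipschitzWith hφ.neg (by rwa [inv_one])

theorem NNReal.inv_one_sub_le_two {K : ℝ≥0} (hK : K ≤ 1 / 2) : (1 - K)⁻¹ ≤ 2 :=
  calc (1 - K)⁻¹ ≤ (1 - 1 / 2)⁻¹ := inv_anti₀ (by norm_num) (tsub_le_tsub_left hK 1)
    _ = 2 := by rw [tsub_eq_of_eq_add (add_halves 1).symm, one_div, inv_inv]

theorem stmt1_general {d : ℕ} (L γ : ℝ) (hL : 0 < L) (hγ : 0 < γ) (hγL : γ ≤ 1 / (2 * L))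
    (f' : EuclideanSpace ℝ (Fin d) → EuclideanSpace ℝ (Fin d))
    (hlip : LipschitzWith (Real.toNNReal L) f')
    (Y : Set (EuclideanSpace ℝ (Fin d))) :
    volume ((fun x => x - γ • f' x) ⁻¹' Y) ≤ (2 : ℝ≥0∞) ^ d * volume Y := by
  set K := Real.toNNReal γ * Real.toNNReal L with hK_def
  have hlip_step : LipschitzWith K fun x => γ • f' x := LipschitzWith.of_dist_le_mul fun x y => by
    rw [dist_smul₀, Real.norm_of_nonneg hγ.le, NNReal.coe_mul, Real.coe_toNNReal _ hγ.le,
      mul_assoc]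
    gcongr
    exact hlip.dist_le_mul x y
  have hK : K ≤ 1 / 2 := by
    rw [hK_def, ← Real.toNNReal_mul hγ.le, Real.toNNReal_le_iff_le_coe, NNReal.coe_div,
      NNReal.coe_one, NNReal.coe_ofNat]
    rw [le_div_iff₀ (by positivity)] at hγL
    linarith
  have hanti := hlip_step.antilipschitzWith_id_sub (hK.trans_lt (by norm_num))
  calc volume ((fun x => x - γ • f' x) ⁻¹' Y)
      ≤ ((1 - K)⁻¹ : ℝ≥0) ^ Module.finrank ℝ (EuclideanSpace ℝ (Fin d)) * volume Y :=
        hanti.addHaar_preimage_le volume Y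
    _ ≤ 2 ^ d * volume Y := by
        rw [finrank_euclideanSpace_fin]
        gcongr
        exact_mod_cast NNReal.inv_one_sub_le_two hK

/-- For `f` twice continuously differentiable with L-Lipschitz gradient `f'`
and `γ ≤ 1/(2L)`, the GD map `g(x) = x - γ∇f(x)` satisfies
`ℒ(g⁻¹(Y)) ≤ 2^d · ℒ(Y)` for every measurable `Y`. -/
theorem stmt1 {d : ℕ} (L γ : ℝ) (hL : 0 < L) (hγ : 0 < γ) (hγL : γ ≤ 1 / (2 * L))
    (f : EuclideanSpace ℝ (Fin d) → ℝ)
    (f' : EuclideanSpace ℝ (Fin d) → EuclideanSpace ℝ (Fin d))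
    (hf : ContDiff ℝ 2 f)
    (hgrad : ∀ x, HasGradientAt f (f' x) x)
    (hlip : LipschitzWith (Real.toNNReal L) f')
    (Y : Set (EuclideanSpace ℝ (Fin d))) (hY : MeasurableSet Y) :
    volume ((fun x => x - γ • f' x) ⁻¹' Y) ≤ (2 : ℝ≥0∞) ^ d * volume Y :=
  stmt1_general L γ hL hγ hγL f' hlip Y
end

section
/- Let f : ℝ^d → ℝ be L-smooth and twice continuously differentiable, γ ≤ 1/(2L), and let X ⊆ ℝ^d be measurable. If gradient descent x_{t+1} = x_t - γ∇f(x_t) is initialized uniformly at random in a measurable set W with ℒ(W) > 0, then the probability that x_t ∈ X for some 0 ≤ t ≤ T is at most 2^{(T+1)d} · ℒ(X)/ℒ(W). -/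
/-!
The gradient step `g x = x - γ ∇f x` is injective, because `γ ∇f` is a contraction, and its
Jacobian `1 - γ ∇²f x` is symmetric with all eigenvalues at least `1 - γL ≥ 1/2`. The change of
variables inequality then gives `ℒ(g⁻¹ A) ≤ 2^d ℒ(A)` for every `A`, hence
`ℒ((g^[t])⁻¹ X) ≤ 2^{td} ℒ(X)`, and a union bound over `t ≤ T` (a geometric sum with ratio
`2^d ≥ 2`, so dominated by its next term) bounds the hitting set by `2^{(T+1)d} ℒ(X)`. In
dimension `0` every point is fixed and the hitting set lies in `X`.
-/

open MeasureTheory InnerProductSpace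
open scoped ENNReal NNReal

section Gradient

variable {E : Type*} [NormedAddCommGroup E] [InnerProductSpace ℝ E] [CompleteSpace E]
  {f : E → ℝ} {f' : E → E}

theorem contDiff_of_hasGradientAt {n : WithTop ℕ∞} (hf : ContDiff ℝ (n + 1) f)
    (hgrad : ∀ x, HasGradientAt f (f' x) x) : ContDiff ℝ n f' := by
  have hf' : f' = fun x => (toDual ℝ E).symm (fderiv ℝ f x) := by
    funext x
    simp [(hasGradientAt_iff_hasFDerivAt.mp (hgrad x)).fderiv]
  rw [hf']
  exact (toDual ℝ E).symm.contDiff.comp (hf.fderiv_right le_rfl)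

theorem isSymmetric_of_hasFDerivAt_gradient {H : E →L[ℝ] E} {x : E}
    (hgrad : ∀ y, HasGradientAt f (f' y) y) (hH : HasFDerivAt f' H x) :
    (H : E →ₗ[ℝ] E).IsSymmetric := by
  intro u v
  have h := second_derivative_symmetric (fun y => hasGradientAt_iff_hasFDerivAt.mp (hgrad y))
    ((innerSL ℝ : E →L[ℝ] E →L[ℝ] ℝ).hasFDerivAt.comp x hH) u v
  change inner ℝ (H u) v = inner ℝ (H v) u at h
  simpa only [ContinuousLinearMap.coe_coe, real_inner_comm u] using h

end Gradient

theorem LinearMap.IsSymmetric.pow_finrank_le_det {E : Type*} [NormedAddCommGroup E]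
    [InnerProductSpace ℝ E] [FiniteDimensional ℝ E] {S : E →ₗ[ℝ] E} (hS : S.IsSymmetric)
    {c : ℝ} (hc : 0 ≤ c) (hcoercive : ∀ v, c * ‖v‖ ^ 2 ≤ inner ℝ (S v) v) :
    c ^ Module.finrank ℝ E ≤ S.det := by
  have heig : ∀ i, c ≤ hS.eigenvalues rfl i := by
    intro i
    have hb : ‖hS.eigenvectorBasis rfl i‖ = 1 := (hS.eigenvectorBasis rfl).orthonormal.1 i
    simpa [hS.apply_eigenvectorBasis, real_inner_smul_left, hb] using
      hcoercive (hS.eigenvectorBasis rfl i)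
  rw [hS.det_eq_prod_eigenvalues rfl]
  calc c ^ Module.finrank ℝ E = ∏ _i, c := by simp
    _ ≤ ∏ i, hS.eigenvalues rfl i := Finset.prod_le_prod (fun _ _ => hc) (fun i _ => heig i)

theorem LipschitzWith.injective_id_sub {E : Type*} [NormedAddCommGroup E] {h : E → E}
    {K : ℝ≥0} (hh : LipschitzWith K h) (hK : K < 1) : Function.Injective (fun x => x - h x) := by
  intro x y hxy
  have hdist : dist x y = dist (h x) (h y) := by
    rw [dist_eq_norm, dist_eq_norm, sub_eq_sub_iff_sub_eq_sub.mp hxy]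
  have hle : dist x y ≤ K * dist x y := hdist ▸ hh.dist_le_mul x y
  have hK' : (K : ℝ) < 1 := hK
  exact dist_le_zero.mp (by nlinarith [dist_nonneg (x := x) (y := y)])

theorem addHaar_preimage_le_of_le_abs_det {E : Type*} [NormedAddCommGroup E]
    [NormedSpace ℝ E] [FiniteDimensional ℝ E] [MeasurableSpace E] [BorelSpace E]
    (μ : Measure E) [μ.IsAddHaarMeasure] {g : E → E} {g' : E → E →L[ℝ] E}
    (hg : Function.Injective g) (hg' : ∀ x, HasFDerivAt g (g' x) x) {c : ℝ}
    (hc : ∀ x, c ≤ |(g' x).det|) (A : Set E) :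
    ENNReal.ofReal c * μ (g ⁻¹' A) ≤ μ A := by
  have hgc : Continuous g := continuous_iff_continuousAt.mpr fun x => (hg' x).continuousAt
  set s := g ⁻¹' toMeasurable μ A
  have hs : MeasurableSet s := (measurableSet_toMeasurable μ A).preimage hgc.measurable
  calc ENNReal.ofReal c * μ (g ⁻¹' A)
      ≤ ENNReal.ofReal c * μ s := by gcongr; exact Set.preimage_mono (subset_toMeasurable μ A)
    _ = ∫⁻ _ in s, ENNReal.ofReal c ∂μ := (setLIntegral_const _ _).symm
    _ ≤ ∫⁻ x in s, ENNReal.ofReal |(g' x).det| ∂μ := by gcongr with x; exact hc x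
    _ ≤ μ (g '' s) := lintegral_abs_det_fderiv_le_addHaar_image μ hs
        (fun x _ => (hg' x).hasFDerivWithinAt) hg.injOn
    _ ≤ μ (toMeasurable μ A) := measure_mono (Set.image_preimage_subset _ _)
    _ = μ A := measure_toMeasurable A

section GradientStep

variable {E : Type*} [NormedAddCommGroup E] [InnerProductSpace ℝ E] [FiniteDimensional ℝ E]

theorem half_pow_finrank_le_det_one_sub_smul {H : E →L[ℝ] E}
    (hH : (H : E →ₗ[ℝ] E).IsSymmetric) {K : ℝ≥0} (hHK : ‖H‖ ≤ K) {γ : ℝ} (hγ : 0 ≤ γ)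
    (hγK : γ * K ≤ 1 / 2) : (1 / 2 : ℝ) ^ Module.finrank ℝ E ≤ (1 - γ • H).det := by
  have hsymm : ((1 - γ • H : E →L[ℝ] E) : E →ₗ[ℝ] E).IsSymmetric := by
    simpa using LinearMap.IsSymmetric.one.sub (hH.smul (conj_trivial γ))
  refine hsymm.pow_finrank_le_det (by norm_num) fun v => ?_
  have hHv : inner ℝ (H v) v ≤ K * ‖v‖ ^ 2 :=
    calc inner ℝ (H v) v ≤ ‖H v‖ * ‖v‖ := real_inner_le_norm _ _
      _ ≤ ‖H‖ * ‖v‖ * ‖v‖ := by gcongr; exact H.le_opNorm v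
      _ ≤ K * ‖v‖ ^ 2 := by rw [mul_assoc, ← sq]; gcongr
  have hexpand : inner ℝ ((1 - γ • H : E →L[ℝ] E) v) v = ‖v‖ ^ 2 - γ * inner ℝ (H v) v := by
    simp [inner_sub_left, real_inner_smul_left]
  rw [ContinuousLinearMap.coe_coe, hexpand]
  nlinarith [mul_le_mul_of_nonneg_left hHv hγ, sq_nonneg ‖v‖]

variable [MeasurableSpace E] [BorelSpace E] (μ : Measure E) [μ.IsAddHaarMeasure]

theorem addHaar_preimage_gradientStep_le {f : E → ℝ} {f' : E → E} {K : ℝ≥0} {γ : ℝ}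
    (hf : ContDiff ℝ 2 f) (hgrad : ∀ x, HasGradientAt f (f' x) x) (hlip : LipschitzWith K f')
    (hγ : 0 ≤ γ) (hγK : γ * K ≤ 1 / 2) (A : Set E) :
    μ ((fun x => x - γ • f' x) ⁻¹' A) ≤ 2 ^ Module.finrank ℝ E * μ A := by
  set n := Module.finrank ℝ E
  have hdiff : Differentiable ℝ f' :=
    (contDiff_of_hasGradientAt (n := 1) hf hgrad).differentiable one_ne_zero
  have hderiv : ∀ x, HasFDerivAt (fun x => x - γ • f' x) (1 - γ • fderiv ℝ f' x) x :=
    fun x => (hasFDerivAt_id x).sub ((hdiff x).hasFDerivAt.const_smul γ)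
  have hdet : ∀ x, (1 / 2 : ℝ) ^ n ≤ |(1 - γ • fderiv ℝ f' x).det| :=
    fun x => (half_pow_finrank_le_det_one_sub_smul
      (isSymmetric_of_hasFDerivAt_gradient hgrad (hdiff x).hasFDerivAt)
      (norm_fderiv_le_of_lipschitz ℝ hlip) hγ hγK).trans (le_abs_self _)
  have hinj : Function.Injective (fun x => x - γ • f' x) := by
    refine ((lipschitzWith_smul γ).comp hlip).injective_id_sub ?_
    rw [← NNReal.coe_lt_coe, NNReal.coe_mul, coe_nnnorm, Real.norm_of_nonneg hγ, NNReal.coe_one]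
    linarith
  have hcancel : (2 : ℝ≥0∞) ^ n * ENNReal.ofReal ((1 / 2) ^ n) = 1 := by
    rw [ENNReal.ofReal_pow (by norm_num), ← mul_pow, one_div, ENNReal.ofReal_inv_of_pos two_pos]
    simp [ENNReal.mul_inv_cancel]
  calc μ ((fun x => x - γ • f' x) ⁻¹' A)
      = 2 ^ n * (ENNReal.ofReal ((1 / 2) ^ n) * μ ((fun x => x - γ • f' x) ⁻¹' A)) := by
        rw [← mul_assoc, hcancel, one_mul]
    _ ≤ 2 ^ n * μ A := by gcongr; exact addHaar_preimage_le_of_le_abs_det μ hinj hderiv hdet A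

end GradientStep

section Iterate

variable {α : Type*} [MeasurableSpace α] {μ : Measure α} {g : α → α} {C : ℝ≥0∞}

theorem measure_preimage_iterate_le (h : ∀ A, μ (g ⁻¹' A) ≤ C * μ A) (t : ℕ) (A : Set α) :
    μ (g^[t] ⁻¹' A) ≤ C ^ t * μ A := by
  induction t with
  | zero => simp
  | succ t ih =>
    rw [Function.iterate_succ, Set.preimage_comp, pow_succ', mul_assoc]
    exact (h _).trans (by gcongr)

theorem measure_exists_iterate_mem_le (h : ∀ A, μ (g ⁻¹' A) ≤ C * μ A) (hC : 2 ≤ C)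
    (T : ℕ) (X : Set α) : μ {x | ∃ t ≤ T, g^[t] x ∈ X} ≤ C ^ (T + 1) * μ X := by
  induction T with
  | zero => simpa using le_mul_of_one_le_left (zero_le (a := μ X)) (one_le_two.trans hC)
  | succ T ih =>
    have hsplit : {x | ∃ t ≤ T + 1, g^[t] x ∈ X} ⊆
        {x | ∃ t ≤ T, g^[t] x ∈ X} ∪ g^[T + 1] ⁻¹' X := by
      rintro x ⟨t, ht, hx⟩
      rcases Nat.le_succ_iff.mp ht with ht | rfl
      · exact Or.inl ⟨t, ht, hx⟩
      · exact Or.inr hx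
    calc μ {x | ∃ t ≤ T + 1, g^[t] x ∈ X}
        ≤ μ {x | ∃ t ≤ T, g^[t] x ∈ X} + μ (g^[T + 1] ⁻¹' X) :=
          (measure_mono hsplit).trans (measure_union_le _ _)
      _ ≤ C ^ (T + 1) * μ X + C ^ (T + 1) * μ X :=
          add_le_add ih (measure_preimage_iterate_le h _ X)
      _ = 2 * C ^ (T + 1) * μ X := by ring
      _ ≤ C ^ (T + 2) * μ X := by rw [pow_succ' C (T + 1)]; gcongr

end Iterate

theorem stmt3_general {d : ℕ} (L γ : ℝ) (hγ : 0 < γ) (hγL : γ ≤ 1 / (2 * L))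
    (f : EuclideanSpace ℝ (Fin d) → ℝ)
    (f' : EuclideanSpace ℝ (Fin d) → EuclideanSpace ℝ (Fin d))
    (hf : ContDiff ℝ 2 f)
    (hgrad : ∀ x, HasGradientAt f (f' x) x)
    (hlip : LipschitzWith (Real.toNNReal L) f')
    (W X : Set (EuclideanSpace ℝ (Fin d)))
    (T : ℕ) :
    volume {x₀ ∈ W | ∃ t ≤ T, (fun x => x - γ • f' x)^[t] x₀ ∈ X} / volume W ≤
      (2 : ℝ≥0∞) ^ ((T + 1) * d) * volume X / volume W := by
  have hL : 0 < L := by linarith [one_div_pos.mp (hγ.trans_le hγL)]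
  have hγK : γ * L.toNNReal ≤ 1 / 2 := by
    rw [Real.coe_toNNReal L hL.le]
    rw [le_div_iff₀ (by positivity)] at hγL
    linarith
  refine ENNReal.div_le_div_right ?_ _
  refine (measure_mono (Set.sep_subset_ofPred _ _)).trans ?_
  rcases Nat.eq_zero_or_pos d with rfl | hd
  · have hfixed : {x | ∃ t ≤ T, (fun x => x - γ • f' x)^[t] x ∈ X} ⊆ X := by
      rintro x ⟨t, -, hx⟩
      rwa [Subsingleton.elim x ((fun x => x - γ • f' x)^[t] x)]
    simpa using measure_mono (μ := volume) hfixed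
  · have hstep := addHaar_preimage_gradientStep_le volume hf hgrad hlip hγ.le hγK
    rw [finrank_euclideanSpace_fin] at hstep
    calc volume {x | ∃ t ≤ T, (fun x => x - γ • f' x)^[t] x ∈ X}
        ≤ (2 ^ d) ^ (T + 1) * volume X :=
          measure_exists_iterate_mem_le hstep (le_self_pow₀ one_le_two hd.ne') T X
      _ = 2 ^ ((T + 1) * d) * volume X := by rw [← pow_mul, mul_comm d]

/-- GD `x_{t+1} = x_t - γ∇f(x_t)` initialized uniformly at random in `W`
(of positive finite measure) hits a measurable set `X` within the first `T` steps with
probability at most `2^{(T+1)d} · ℒ(X)/ℒ(W)`. -/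
theorem stmt3 {d : ℕ} (L γ : ℝ) (hL : 0 < L) (hγ : 0 < γ) (hγL : γ ≤ 1 / (2 * L))
    (f : EuclideanSpace ℝ (Fin d) → ℝ)
    (f' : EuclideanSpace ℝ (Fin d) → EuclideanSpace ℝ (Fin d))
    (hf : ContDiff ℝ 2 f)
    (hgrad : ∀ x, HasGradientAt f (f' x) x)
    (hlip : LipschitzWith (Real.toNNReal L) f')
    (W X : Set (EuclideanSpace ℝ (Fin d))) (hW : MeasurableSet W) (hX : MeasurableSet X)
    (hWpos : 0 < volume W) (hWfin : volume W < ⊤)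
    (T : ℕ) :
    volume {x₀ ∈ W | ∃ t ≤ T, (fun x => x - γ • f' x)^[t] x₀ ∈ X} / volume W ≤
      (2 : ℝ≥0∞) ^ ((T + 1) * d) * volume X / volume W :=
  stmt3_general L γ hγ hγL f f' hf hgrad hlip W X T
end

section
/- Suppose f : ℝ^d → ℝ is differentiable, L-smooth, and μ-one-point-strongly-convex with respect to x⋆ on all of ℝ^d, i.e. ⟨∇f(x), x - x⋆⟩ ≥ μ‖x - x⋆‖² for all x. Then for step size 0 < γ ≤ μ/L², each gradient descent step satisfies ‖x_{t+1} - x⋆‖² ≤ (1 - γμ)‖x_t - x⋆‖². -/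
open scoped RealInnerProductSpace

/-- If `f` is differentiable, L-smooth (gradient L-Lipschitz, `∇f(x⋆) = 0`) and
μ-one-point-strongly-convex w.r.t. `x⋆` on ℝ^d, then for `0 < γ ≤ μ/L²` one GD step satisfies
`‖x_{t+1} - x⋆‖² ≤ (1 - γμ)‖x_t - x⋆‖²`. -/
theorem stmt5 {d : ℕ} (L μ γ : ℝ) (hL : 0 < L) (hμ : 0 < μ) (hγ : 0 < γ) (hγL : γ ≤ μ / L ^ 2)
    (f : EuclideanSpace ℝ (Fin d) → ℝ)
    (f' : EuclideanSpace ℝ (Fin d) → EuclideanSpace ℝ (Fin d))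
    (xstar : EuclideanSpace ℝ (Fin d))
    (hgrad : ∀ x, HasGradientAt f (f' x) x)
    (hlip : ∀ x y, ‖f' x - f' y‖ ≤ L * ‖x - y‖)
    (hcrit : f' xstar = 0)
    (hopsc : ∀ x, ⟪f' x, x - xstar⟫ ≥ μ * ‖x - xstar‖ ^ 2)
    (xt : EuclideanSpace ℝ (Fin d)) :
    ‖(xt - γ • f' xt) - xstar‖ ^ 2 ≤ (1 - γ * μ) * ‖xt - xstar‖ ^ 2 := by
  set g := f' xt with hgdef
  set v := xt - xstar with hvdef
  have hrw : (xt - γ • g) - xstar = v - γ • g := by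
    simp [hvdef]; abel
  have hg : ‖g‖ ≤ L * ‖v‖ := by
    have := hlip xt xstar
    simpa [hcrit, hvdef] using this
  have hinner : ⟪g, v⟫ ≥ μ * ‖v‖ ^ 2 := hopsc xt
  have hexp : ‖v - γ • g‖ ^ 2 = ‖v‖ ^ 2 - 2 * (γ * ⟪g, v⟫) + γ ^ 2 * ‖g‖ ^ 2 := by
    rw [@norm_sub_sq_real]
    rw [real_inner_smul_right, norm_smul, real_inner_comm]
    simp [abs_of_pos hγ]
    ring
  rw [hrw, hexp]
  have hγL2 : γ * L ^ 2 ≤ μ := by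
    rw [div_eq_mul_inv] at hγL
    have := mul_le_mul_of_nonneg_right hγL (sq_nonneg L)
    calc γ * L ^ 2 ≤ μ * (L^2)⁻¹ * L ^ 2 := this
      _ = μ := by field_simp
  have hg2 : ‖g‖ ^ 2 ≤ L ^ 2 * ‖v‖ ^ 2 := by
    nlinarith [norm_nonneg g, norm_nonneg v]
  nlinarith [mul_le_mul_of_nonneg_left hg2 (sq_nonneg γ),
    mul_le_mul_of_nonneg_left hinner hγ.le,
    mul_le_mul_of_nonneg_right hγL2 (mul_nonneg hγ.le (sq_nonneg ‖v‖))]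
end

section
/- Suppose f : ℝ^d → ℝ is L-smooth with ∇f(x⋆) = 0 and μ-one-point-strongly-convex with respect to x⋆ on ℝ^d, and 0 < γ ≤ μ/L². Then for all T ≥ 0, the GD iterates satisfy ‖x_T - x⋆‖² ≤ (1 - γμ)^T ‖x_0 - x⋆‖², hence x_t → x⋆ as t → ∞. -/
open scoped RealInnerProductSpace
open Filter

/-- Under L-smoothness with `∇f(x⋆) = 0` and μ-one-point strong convexity toward
`x⋆` on ℝ^d, GD with `0 < γ ≤ μ/L²` satisfies `‖x_T - x⋆‖² ≤ (1 - γμ)^T ‖x_0 - x⋆‖²` for all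
`T`, hence `x_t → x⋆`. -/
theorem stmt6 {d : ℕ} (L μ γ : ℝ) (hL : 0 < L) (hμ : 0 < μ) (hμL : μ ≤ L)
    (hγ : 0 < γ) (hγL : γ ≤ μ / L ^ 2)
    (f : EuclideanSpace ℝ (Fin d) → ℝ)
    (f' : EuclideanSpace ℝ (Fin d) → EuclideanSpace ℝ (Fin d))
    (xstar : EuclideanSpace ℝ (Fin d))
    (hgrad : ∀ x, HasGradientAt f (f' x) x)
    (hlip : ∀ x y, ‖f' x - f' y‖ ≤ L * ‖x - y‖)
    (hcrit : f' xstar = 0)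
    (hopsc : ∀ x, ⟪f' x, x - xstar⟫ ≥ μ * ‖x - xstar‖ ^ 2)
    (x : ℕ → EuclideanSpace ℝ (Fin d))
    (hiter : ∀ t, x (t + 1) = x t - γ • f' (x t)) :
    (∀ T, ‖x T - xstar‖ ^ 2 ≤ (1 - γ * μ) ^ T * ‖x 0 - xstar‖ ^ 2) ∧
      Tendsto x atTop (nhds xstar) := by
  have hγL2 : γ * L ^ 2 ≤ μ := by
    rw [← le_div_iff₀ (by positivity)] at *; exact hγL
  have hr0 : 0 ≤ 1 - γ * μ := by
    have h1 : μ * (γ * L ^ 2) ≤ μ * μ := mul_le_mul_of_nonneg_left hγL2 hμ.le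
    have h2 : μ * μ ≤ L * L := mul_le_mul hμL hμL hμ.le hL.le
    nlinarith [mul_pos hL hL]
  have hr1 : 1 - γ * μ < 1 := by nlinarith [mul_pos hγ hμ]
  have key : ∀ t, ‖x (t + 1) - xstar‖ ^ 2 ≤ (1 - γ * μ) * ‖x t - xstar‖ ^ 2 := by
    intro t
    set a := x t - xstar with ha
    set g := f' (x t) with hg
    have hx1 : x (t + 1) - xstar = a - γ • g := by
      rw [hiter t, sub_right_comm]
    have hnormg : ‖g‖ ≤ L * ‖a‖ := by
      have := hlip (x t) xstar
      rwa [hcrit, sub_zero] at this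
    have hng2 : ‖g‖ ^ 2 ≤ L ^ 2 * ‖a‖ ^ 2 := by nlinarith [norm_nonneg g, norm_nonneg a]
    have hin : ⟪g, a⟫ ≥ μ * ‖a‖ ^ 2 := hopsc (x t)
    have hexp : ‖a - γ • g‖ ^ 2 = ‖a‖ ^ 2 - 2 * γ * ⟪g, a⟫ + γ ^ 2 * ‖g‖ ^ 2 := by
      rw [norm_sub_sq_real, real_inner_smul_right, norm_smul, real_inner_comm]
      simp [abs_of_pos hγ]
      ring
    rw [hx1, hexp]
    have h2 : γ ^ 2 * ‖g‖ ^ 2 ≤ γ ^ 2 * (L ^ 2 * ‖a‖ ^ 2) := by nlinarith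
    have h3 : γ ^ 2 * L ^ 2 ≤ γ * μ := by nlinarith
    nlinarith [norm_nonneg a, sq_nonneg ‖a‖]
  have hbound : ∀ T, ‖x T - xstar‖ ^ 2 ≤ (1 - γ * μ) ^ T * ‖x 0 - xstar‖ ^ 2 := by
    intro T
    induction T with
    | zero => simp
    | succ n ih =>
      calc ‖x (n + 1) - xstar‖ ^ 2 ≤ (1 - γ * μ) * ‖x n - xstar‖ ^ 2 := key n
        _ ≤ (1 - γ * μ) * ((1 - γ * μ) ^ n * ‖x 0 - xstar‖ ^ 2) := by
            exact mul_le_mul_of_nonneg_left ih hr0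
        _ = (1 - γ * μ) ^ (n + 1) * ‖x 0 - xstar‖ ^ 2 := by ring
  refine ⟨hbound, ?_⟩
  have htend : Tendsto (fun T => (1 - γ * μ) ^ T * ‖x 0 - xstar‖ ^ 2) atTop (nhds 0) := by
    have : Tendsto (fun T => (1 - γ * μ) ^ T) atTop (nhds 0) :=
      tendsto_pow_atTop_nhds_zero_of_lt_one hr0 hr1
    simpa using this.mul_const (‖x 0 - xstar‖ ^ 2)
  have hsq : Tendsto (fun T => ‖x T - xstar‖ ^ 2) atTop (nhds 0) := by
    refine squeeze_zero (fun T => by positivity) hbound htend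
  have hn : Tendsto (fun T => ‖x T - xstar‖) atTop (nhds 0) := by
    have := hsq.sqrt
    simpa [Real.sqrt_sq (norm_nonneg _)] using this
  have := tendsto_sub_nhds_zero_iff.mp (tendsto_zero_iff_norm_tendsto_zero.mpr hn)
  exact this
end

section
/- Let f : ℝ^d → ℝ be L-smooth (with ∇f(x⋆)=0) and μ-one-point-strongly-convex with respect to x⋆ on ℝ^d \ X, where X ⊆ ℝ^d. Define c_X = inf{‖x - x⋆‖ : x ∈ X} and suppose the GD iterate x_t satisfies ‖x_t - x⋆‖² < c_X² and x_t ∉ X, with step size 0 < γ ≤ μ/L². Then ‖x_{t+1} - x⋆‖² < c_X², so x_{t+1} ∉ X; hence if the distance to x⋆ ever drops below c_X, GD never visits X again. -/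
open scoped RealInnerProductSpace

/-- With `f` L-smooth (`∇f(x⋆) = 0`) and μ-OPSC toward `x⋆` on `ℝ^d \ X`, and
`c_X = inf{‖x - x⋆‖ : x ∈ X}`, if the current iterate `x_t ∉ X` satisfies
`‖x_t - x⋆‖² < c_X²`, then with `0 < γ ≤ μ/L²` the next iterate satisfies
`‖x_{t+1} - x⋆‖² < c_X²` and `x_{t+1} ∉ X`. -/
theorem stmt7 {d : ℕ} (L μ γ : ℝ) (hL : 0 < L) (hμ : 0 < μ) (hγ : 0 < γ) (hγL : γ ≤ μ / L ^ 2)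
    (f : EuclideanSpace ℝ (Fin d) → ℝ)
    (f' : EuclideanSpace ℝ (Fin d) → EuclideanSpace ℝ (Fin d))
    (xstar : EuclideanSpace ℝ (Fin d))
    (X : Set (EuclideanSpace ℝ (Fin d)))
    (hgrad : ∀ x, HasGradientAt f (f' x) x)
    (hlip : ∀ x y, ‖f' x - f' y‖ ≤ L * ‖x - y‖)
    (hcrit : f' xstar = 0)
    (hopsc : ∀ x ∉ X, ⟪f' x, x - xstar⟫ ≥ μ * ‖x - xstar‖ ^ 2)
    (cX : ℝ) (hcX : cX = sInf ((fun z => ‖z - xstar‖) '' X))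
    (xt : EuclideanSpace ℝ (Fin d)) (hxt : xt ∉ X)
    (hlt : ‖xt - xstar‖ ^ 2 < cX ^ 2) :
    ‖(xt - γ • f' xt) - xstar‖ ^ 2 < cX ^ 2 ∧ (xt - γ • f' xt) ∉ X := by
  set a := xt - xstar with ha
  set g := f' xt with hg
  have hgn : ‖g‖ ≤ L * ‖a‖ := by
    have := hlip xt xstar
    rwa [hcrit, sub_zero] at this
  have hinner : ⟪g, a⟫ ≥ μ * ‖a‖ ^ 2 := hopsc xt hxt
  have hkey : ‖(xt - γ • g) - xstar‖ ^ 2 ≤ (1 - γ * μ) * ‖a‖ ^ 2 := by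
    have heq : (xt - γ • g) - xstar = a - γ • g := by
      simp [ha]; abel
    rw [heq, norm_sub_sq_real]
    have h1 : ⟪a, γ • g⟫ = γ * ⟪g, a⟫ := by
      rw [real_inner_smul_right, real_inner_comm]
    have h2 : ‖γ • g‖ ^ 2 ≤ γ ^ 2 * (L * ‖a‖) ^ 2 := by
      rw [norm_smul, mul_pow]
      have h : ‖g‖ ^ 2 ≤ (L * ‖a‖) ^ 2 := by
        apply pow_le_pow_left₀ (norm_nonneg _) hgn
      rw [Real.norm_eq_abs, sq_abs]
      exact mul_le_mul_of_nonneg_left h (sq_nonneg γ)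
    have h3 : γ ^ 2 * L ^ 2 ≤ γ * μ := by
      have hb : γ * L ^ 2 ≤ μ := by
        rw [le_div_iff₀ (by positivity : (0:ℝ) < L ^ 2)] at hγL
        linarith
      nlinarith [hγ.le, hb]
    nlinarith [mul_le_mul_of_nonneg_left hinner (le_of_lt hγ), sq_nonneg ‖a‖]
  have hmain : ‖(xt - γ • g) - xstar‖ ^ 2 < cX ^ 2 := by
    have : (1 - γ * μ) * ‖a‖ ^ 2 ≤ ‖a‖ ^ 2 := by
      nlinarith [mul_nonneg (mul_pos hγ hμ).le (sq_nonneg ‖a‖)]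
    linarith
  refine ⟨hmain, fun hmem => ?_⟩
  have hcX0 : 0 ≤ cX := by
    rw [hcX]
    apply Real.sInf_nonneg
    rintro r ⟨z, _, rfl⟩
    exact norm_nonneg _
  have hle : cX ≤ ‖(xt - γ • g) - xstar‖ := by
    rw [hcX]
    apply csInf_le
    · exact ⟨0, fun r ⟨z, _, hz⟩ => hz ▸ norm_nonneg _⟩
    · exact ⟨_, hmem, rfl⟩
  have : cX ^ 2 ≤ ‖(xt - γ • g) - xstar‖ ^ 2 := pow_le_pow_left₀ hcX0 hle 2
  linarith
end

section
/- Let f : ℝ^d → ℝ be differentiable and satisfy ⟨∇f(x), x - x†⟩ ≥ μ†‖x - x†‖² and ‖∇f(x)‖ ≥ μ⋆‖x - x†‖ on a set M containing x†. If the step size satisfies γμ⋆ > 2, then for any x_t ∈ M with x_t ≠ x†, the GD step satisfies ‖x_{t+1} - x†‖² ≥ (2γμ⋆ - 3)‖x_t - x†‖², i.e. the distance to x† grows by a factor at least √(2γμ⋆ - 3) > 1. -/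
open scoped RealInnerProductSpace

/-- If on a set `M` containing `x†` we have `⟨∇f(x), x - x†⟩ ≥ μ†‖x - x†‖²` and
`‖∇f(x)‖ ≥ μ⋆‖x - x†‖`, and `γμ⋆ > 2`, then for `x_t ∈ M`, `x_t ≠ x†`, the GD step satisfies
`‖x_{t+1} - x†‖² ≥ (2γμ⋆ - 3)‖x_t - x†‖²`. -/
theorem stmt8 {d : ℕ} (μdag μstar γ : ℝ) (hμdag : 0 < μdag) (hμstar : 0 < μstar)
    (hμ : μstar ≤ μdag) (hγ : 0 < γ) (hγμ : γ * μstar > 2)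
    (f : EuclideanSpace ℝ (Fin d) → ℝ)
    (f' : EuclideanSpace ℝ (Fin d) → EuclideanSpace ℝ (Fin d))
    (M : Set (EuclideanSpace ℝ (Fin d)))
    (xdag : EuclideanSpace ℝ (Fin d)) (hxdag : xdag ∈ M)
    (hgrad : ∀ x, HasGradientAt f (f' x) x)
    (hopsc : ∀ x ∈ M, ⟪f' x, x - xdag⟫ ≥ μdag * ‖x - xdag‖ ^ 2)
    (hgradlb : ∀ x ∈ M, ‖f' x‖ ≥ μstar * ‖x - xdag‖)
    (xt : EuclideanSpace ℝ (Fin d)) (hxt : xt ∈ M) (hne : xt ≠ xdag) :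
    ‖(xt - γ • f' xt) - xdag‖ ^ 2 ≥ (2 * γ * μstar - 3) * ‖xt - xdag‖ ^ 2 := by
  set g := f' xt
  set y := xt - xdag with hy
  have hrw : xt - γ • g - xdag = y - γ • g := by rw [hy]; abel
  have hexp : ‖y - γ • g‖ ^ 2 = ‖y‖ ^ 2 - 2 * (γ * ⟪y, g⟫) + γ ^ 2 * ‖g‖ ^ 2 := by
    rw [norm_sub_sq_real, real_inner_smul_right, norm_smul]
    simp [abs_of_pos hγ, mul_pow]
  have hcs : ⟪y, g⟫ ≤ ‖y‖ * ‖g‖ := real_inner_le_norm y g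
  have hg : ‖g‖ ≥ μstar * ‖y‖ := hgradlb xt hxt
  have hyn : (0:ℝ) ≤ ‖y‖ := norm_nonneg y
  rw [hrw, hexp]
  have ha : γ * ‖g‖ ≥ γ * (μstar * ‖y‖) := by
    exact mul_le_mul_of_nonneg_left hg (le_of_lt hγ)
  have hs2 : γ * (μstar * ‖y‖) ≥ 2 * ‖y‖ := by nlinarith
  have hkey : (γ * ‖g‖ - γ * (μstar * ‖y‖)) * (γ * ‖g‖ + γ * (μstar * ‖y‖) - 2 * ‖y‖) ≥ 0 := by
    apply mul_nonneg <;> nlinarith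
  nlinarith [sq_nonneg (γ * (μstar * ‖y‖) - 2 * ‖y‖), mul_le_mul_of_nonneg_left hcs (le_of_lt hγ)]
end

section
/- Let f : ℝ^d → ℝ be differentiable, and suppose on a set containing x, f is L-smooth toward x⋆ (‖∇f(x)‖ ≤ L‖x - x⋆‖) and μ⋆-OPSC toward x⋆. If 0 < γ ≤ μ⋆/L², then ‖x - γ∇f(x) - x⋆‖ ≤ √(1 - γμ⋆)·‖x - x⋆‖. -/
open scoped RealInnerProductSpace

/-- If at a point `x` we have `‖∇f(x)‖ ≤ L‖x - x⋆‖` and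
`⟨∇f(x), x - x⋆⟩ ≥ μ⋆‖x - x⋆‖²`, with `0 < μ⋆ ≤ L` and `0 < γ ≤ μ⋆/L²`, then
`‖x - γ∇f(x) - x⋆‖ ≤ √(1 - γμ⋆)·‖x - x⋆‖`. -/
theorem stmt10 {d : ℕ} (L μstar γ : ℝ) (hL : 0 < L) (hμ : 0 < μstar) (hμL : μstar ≤ L)
    (hγ : 0 < γ) (hγL : γ ≤ μstar / L ^ 2)
    (f : EuclideanSpace ℝ (Fin d) → ℝ)
    (f' : EuclideanSpace ℝ (Fin d) → EuclideanSpace ℝ (Fin d))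
    (xstar : EuclideanSpace ℝ (Fin d))
    (hgrad : ∀ y, HasGradientAt f (f' y) y)
    (hcrit : f' xstar = 0)
    (x : EuclideanSpace ℝ (Fin d))
    (hgradub : ‖f' x‖ ≤ L * ‖x - xstar‖)
    (hopsc : ⟪f' x, x - xstar⟫ ≥ μstar * ‖x - xstar‖ ^ 2) :
    ‖(x - γ • f' x) - xstar‖ ≤ Real.sqrt (1 - γ * μstar) * ‖x - xstar‖ := by
  set g := f' x
  set r := ‖x - xstar‖
  have hr : 0 ≤ r := norm_nonneg _
  have hkey : ‖(x - γ • g) - xstar‖ ^ 2 ≤ (1 - γ * μstar) * r ^ 2 := by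
    have heq : (x - γ • g) - xstar = (x - xstar) - γ • g := by abel
    rw [heq, norm_sub_sq_real]
    have hin : ⟪x - xstar, γ • g⟫ = γ * ⟪g, x - xstar⟫ := by
      rw [real_inner_smul_right, real_inner_comm]
    have hn : ‖γ • g‖ ^ 2 ≤ γ ^ 2 * (L * r) ^ 2 := by
      rw [norm_smul]
      have : |γ| * ‖g‖ ≤ γ * (L * r) := by
        rw [abs_of_pos hγ]
        exact mul_le_mul_of_nonneg_left hgradub hγ.le
      calc (|γ| * ‖g‖) ^ 2 ≤ (γ * (L * r)) ^ 2 := by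
            apply pow_le_pow_left₀ (by positivity) this
        _ = γ ^ 2 * (L * r) ^ 2 := by ring
    have h1 : 2 * ⟪x - xstar, γ • g⟫ ≥ 2 * γ * (μstar * r ^ 2) := by
      rw [hin]
      nlinarith [hopsc]
    have hγL2 : γ * L ^ 2 ≤ μstar := (le_div_iff₀ (by positivity)).mp hγL
    have hrr : ‖x - xstar‖ = r := rfl
    rw [hrr]
    nlinarith [hn, h1, sq_nonneg r, mul_le_mul_of_nonneg_left hγL2 hγ.le]
  have h2 : ‖(x - γ • g) - xstar‖ ≤ Real.sqrt ((1 - γ * μstar) * r ^ 2) := by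
    rw [← Real.sqrt_sq (norm_nonneg ((x - γ • g) - xstar))]
    exact Real.sqrt_le_sqrt hkey
  calc ‖(x - γ • g) - xstar‖ ≤ Real.sqrt ((1 - γ * μstar) * r ^ 2) := h2
    _ = Real.sqrt (1 - γ * μstar) * r := by
        rw [Real.sqrt_mul' _ (by positivity), Real.sqrt_sq hr, mul_comm]
end

section
/- Full escape theorem: Let f : ℝ^d → ℝ be L_g-smooth globally, and let M ⊆ ℝ^d have diameter r and contain a critical point x†. Let P(M) = {x ∉ M : ‖x - x†‖ ≤ r√(γ²L_g² - 3)}. Assume on P(M), f is L-smooth toward a minimum x⋆ (‖∇f(x)‖ ≤ L‖x - x⋆‖) and μ⋆-OPSC toward x⋆, with ‖x⋆ - x†‖ ≥ r(1 + √((γ²L_g² - 3)(1 - γμ⋆)))/(1 - √(1 - γμ⋆)); assume on M, f is μ†-OPSC toward x† with μ† > 2L²/μ⋆; assume the step size satisfies 2/μ† < γ ≤ μ⋆/L². Then if a GD iterate x_t ∈ M with x_t ≠ x†, there exists k ≥ 1 with x_{t+k} ∉ M, and either ‖x_{t+k} - x⋆‖ ≤ ‖x† - x⋆‖ - r or ‖x_{t+k+1}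 - x⋆‖ ≤ ‖x† - x⋆‖ - r. -/
/-!
Inside `M` the OPSC inequality forces `‖∇f(x)‖ ≥ μ†‖x - x†‖`, and since `γμ† > 2` every GD step
taken in `M` multiplies the distance to `x†` by at least `γμ† - 1 > 1`; as `M` is bounded, the
iterates must leave it. The first iterate `y` outside `M` comes from a point of `M`, and global
`L_g`-smoothness bounds that step by `‖y - x†‖ ≤ √(γ²L_g² - 3) r`, so `y` lies in `P(M)`. There
the conditions toward `x⋆` together with `γL² ≤ μ⋆` make the next step a contraction by
`ρ = √(1 - γμ⋆)` toward `x⋆`, and the distance assumption on `‖x⋆ - x†‖` is exactly what turns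
`ρ (‖x† - x⋆‖ + √(γ²L_g² - 3) r)` into at most `‖x† - x⋆‖ - r`.
-/

open scoped RealInnerProductSpace

theorem le_sqrt_mul_of_sq_le {a b c : ℝ} (hc : 0 ≤ c) (h : a ^ 2 ≤ b * c ^ 2) : a ≤ √b * c :=
  calc a ≤ √(a ^ 2) := Real.le_sqrt_of_sq_le le_rfl
    _ ≤ √(b * c ^ 2) := Real.sqrt_le_sqrt h
    _ = √b * c := by rw [Real.sqrt_mul' b (sq_nonneg c), Real.sqrt_sq hc]

theorem mul_le_sub_of_div_le {ρ r s a D : ℝ} (hρ₀ : 0 ≤ ρ) (hρ₁ : ρ < 1) (ha : a ≤ r * s + D)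
    (hD : r * (1 + s * ρ) / (1 - ρ) ≤ D) : ρ * a ≤ D - r := by
  have hD' := (div_le_iff₀ (sub_pos.2 hρ₁)).1 hD
  nlinarith [mul_le_mul_of_nonneg_left ha hρ₀]

section GradientStep

variable {E : Type*} [NormedAddCommGroup E] [InnerProductSpace ℝ E] {v g : E} {γ μ L : ℝ}

theorem norm_sub_smul_sq (v g : E) (γ : ℝ) :
    ‖v - γ • g‖ ^ 2 = ‖v‖ ^ 2 - 2 * γ * ⟪g, v⟫ + γ ^ 2 * ‖g‖ ^ 2 := by
  rw [norm_sub_sq_real, real_inner_smul_right, real_inner_comm, norm_smul, mul_pow,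
    Real.norm_eq_abs, sq_abs]
  ring

theorem mul_norm_le_norm_of_mul_sq_le_inner (h : μ * ‖v‖ ^ 2 ≤ ⟪g, v⟫) : μ * ‖v‖ ≤ ‖g‖ := by
  rcases (norm_nonneg v).eq_or_lt with hv | hv
  · rw [← hv, mul_zero]
    exact norm_nonneg g
  · refine le_of_mul_le_mul_right ?_ hv
    calc μ * ‖v‖ * ‖v‖ = μ * ‖v‖ ^ 2 := by ring
      _ ≤ ‖g‖ * ‖v‖ := h.trans (real_inner_le_norm g v)

theorem mul_norm_le_norm_sub_smul (h : μ * ‖v‖ ^ 2 ≤ ⟪g, v⟫) (hγ : 0 ≤ γ) :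
    (γ * μ - 1) * ‖v‖ ≤ ‖v - γ • g‖ :=
  calc (γ * μ - 1) * ‖v‖ = γ * (μ * ‖v‖) - ‖v‖ := by ring
    _ ≤ ‖γ • g‖ - ‖v‖ := by
      rw [norm_smul, Real.norm_of_nonneg hγ]
      gcongr
      exact mul_norm_le_norm_of_mul_sq_le_inner h
    _ ≤ ‖v - γ • g‖ := by
      rw [norm_sub_rev]
      exact norm_sub_norm_le _ _

theorem norm_sub_smul_sq_le (h : μ * ‖v‖ ^ 2 ≤ ⟪g, v⟫) (hg : ‖g‖ ≤ L * ‖v‖) (hγ : 0 ≤ γ) :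
    ‖v - γ • g‖ ^ 2 ≤ (1 - 2 * γ * μ + γ ^ 2 * L ^ 2) * ‖v‖ ^ 2 := by
  have hg2 : ‖g‖ ^ 2 ≤ L ^ 2 * ‖v‖ ^ 2 := by
    rw [← mul_pow]
    exact pow_le_pow_left₀ (norm_nonneg g) hg 2
  rw [norm_sub_smul_sq]
  nlinarith [mul_le_mul_of_nonneg_left h hγ, mul_le_mul_of_nonneg_left hg2 (sq_nonneg γ)]

theorem norm_sub_smul_le_sqrt_mul_of_mul_sq_le (h : μ * ‖v‖ ^ 2 ≤ ⟪g, v⟫)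
    (hg : ‖g‖ ≤ L * ‖v‖) (hγ : 0 ≤ γ) (hγL : γ * L ^ 2 ≤ μ) :
    ‖v - γ • g‖ ≤ √(1 - γ * μ) * ‖v‖ := by
  refine le_sqrt_mul_of_sq_le (norm_nonneg v) ((norm_sub_smul_sq_le h hg hγ).trans ?_)
  have : γ * (γ * L ^ 2) ≤ γ * μ := mul_le_mul_of_nonneg_left hγL hγ
  nlinarith [sq_nonneg ‖v‖]

theorem norm_sub_smul_le_sqrt_mul_of_two_le (h : μ * ‖v‖ ^ 2 ≤ ⟪g, v⟫)
    (hg : ‖g‖ ≤ L * ‖v‖) (hγ : 0 ≤ γ) (hγμ : 2 ≤ γ * μ) :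
    ‖v - γ • g‖ ≤ √(γ ^ 2 * L ^ 2 - 3) * ‖v‖ := by
  refine le_sqrt_mul_of_sq_le (norm_nonneg v) ((norm_sub_smul_sq_le h hg hγ).trans ?_)
  nlinarith [sq_nonneg ‖v‖]

end GradientStep

theorem step_size_bounds {L μ μ' γ : ℝ} (hμ : 0 < μ) (hμL : μ ≤ L) (hμ' : 2 * L ^ 2 / μ < μ')
    (hγ₁ : 2 / μ' < γ) (hγ₂ : γ ≤ μ / L ^ 2) :
    0 < γ ∧ 2 < γ * μ' ∧ γ * L ^ 2 ≤ μ ∧ 0 < γ * μ ∧ γ * μ ≤ 1 := by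
  have hL : 0 < L ^ 2 := pow_pos (hμ.trans_le hμL) 2
  have hμ'₀ : 0 < μ' := lt_trans (by positivity) hμ'
  have hγ : 0 < γ := lt_trans (by positivity) hγ₁
  have hγL : γ * L ^ 2 ≤ μ := (le_div_iff₀ hL).1 hγ₂
  refine ⟨hγ, (div_lt_iff₀ hμ'₀).1 hγ₁, hγL, by positivity, ?_⟩
  have hμ2 : μ ^ 2 ≤ L ^ 2 := pow_le_pow_left₀ hμ.le hμL 2
  nlinarith

theorem exists_mem_and_succ_notMem {X : Type*} {u : ℕ → X} {S : Set X} (h₀ : u 0 ∈ S)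
    (h : ∃ n, u n ∉ S) : ∃ n, u n ∈ S ∧ u (n + 1) ∉ S := by
  contrapose! h
  intro n
  induction n with
  | zero => exact h₀
  | succ n ih => exact h n ih

theorem exists_notMem_of_dist_expanding {X : Type*} [MetricSpace X] {u : ℕ → X} {p : X}
    {S : Set X} {q : ℝ} (hS : Bornology.IsBounded S) (hq : 1 < q) (h₀ : u 0 ≠ p)
    (hu : ∀ n, u n ∈ S → q * dist (u n) p ≤ dist (u (n + 1)) p) : ∃ n, u n ∉ S := by
  by_contra! hmem
  have hgeom : ∀ n, q ^ n * dist (u 0) p ≤ dist (u n) p := by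
    intro n
    induction n with
    | zero => simp
    | succ n ih =>
      calc q ^ (n + 1) * dist (u 0) p = q * (q ^ n * dist (u 0) p) := by ring
        _ ≤ q * dist (u n) p := by gcongr
        _ ≤ dist (u (n + 1)) p := hu n (hmem n)
  obtain ⟨R, hR⟩ := hS.subset_closedBall p
  have hpos : 0 < dist (u 0) p := dist_pos.2 h₀
  obtain ⟨n, hn⟩ := pow_unbounded_of_one_lt (R / dist (u 0) p) hq
  have hle : dist (u n) p ≤ R := hR (hmem n)
  rw [div_lt_iff₀ hpos] at hn
  linarith [hgeom n]
theorem stmt12_general {d : ℕ} (Lg L μstar μdag γ r : ℝ)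
    (hμstar : 0 < μstar) (hμL : μstar ≤ L)
    (hμdag : μdag > 2 * L ^ 2 / μstar)
    (hγ1 : 2 / μdag < γ) (hγ2 : γ ≤ μstar / L ^ 2)
    (f' : EuclideanSpace ℝ (Fin d) → EuclideanSpace ℝ (Fin d))
    (M : Set (EuclideanSpace ℝ (Fin d)))
    (xdag xstar : EuclideanSpace ℝ (Fin d))
    (hxdagM : xdag ∈ M)
    (hlipg : ∀ x y, ‖f' x - f' y‖ ≤ Lg * ‖x - y‖)
    (hcritdag : f' xdag = 0)
    (hdiam : ∀ x ∈ M, ∀ y ∈ M, ‖x - y‖ ≤ r)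
    -- conditions on the surrounding region P(M)
    (hP : ∀ x, x ∉ M → ‖x - xdag‖ ≤ r * Real.sqrt (γ ^ 2 * Lg ^ 2 - 3) →
        ⟪f' x, x - xstar⟫ ≥ μstar * ‖x - xstar‖ ^ 2 ∧ ‖f' x‖ ≤ L * ‖x - xstar‖)
    -- the (global) minimum is sufficiently far from M
    (hdist : ‖xstar - xdag‖ ≥
        r * (1 + Real.sqrt ((γ ^ 2 * Lg ^ 2 - 3) * (1 - γ * μstar))) /
          (1 - Real.sqrt (1 - γ * μstar)))
    -- μ†-OPSC toward x† on M
    (hM : ∀ x ∈ M, ⟪f' x, x - xdag⟫ ≥ μdag * ‖x - xdag‖ ^ 2)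
    (x : ℕ → EuclideanSpace ℝ (Fin d))
    (hiter : ∀ s, x (s + 1) = x s - γ • f' (x s))
    (t : ℕ) (hxt : x t ∈ M) (hne : x t ≠ xdag) :
    ∃ k : ℕ, 1 ≤ k ∧ x (t + k) ∉ M ∧
      (‖x (t + k) - xstar‖ ≤ ‖xdag - xstar‖ - r ∨
        ‖x (t + k + 1) - xstar‖ ≤ ‖xdag - xstar‖ - r) := by
  obtain ⟨hγ, hγμdag, hγL, hγμstar, hγμstar₁⟩ := step_size_bounds hμstar hμL hμdag hγ1 hγ2
  have hstep : ∀ s p, x (s + 1) - p = (x s - p) - γ • f' (x s) := fun s p => by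
    rw [hiter]; abel
  have hgrad_le : ∀ y, ‖f' y‖ ≤ Lg * ‖y - xdag‖ := fun y => by
    simpa only [hcritdag, sub_zero] using hlipg y xdag
  have hMbdd : Bornology.IsBounded M :=
    Metric.isBounded_iff.2 ⟨r, fun a ha b hb => (dist_eq_norm a b).trans_le (hdiam a ha b hb)⟩
  have hexit : ∃ n, x (t + n) ∉ M := by
    refine exists_notMem_of_dist_expanding (u := fun n => x (t + n)) (p := xdag) hMbdd
      (by linarith : 1 < γ * μdag - 1) hne fun n hn => ?_
    simp only [dist_eq_norm, ← add_assoc, hstep]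
    exact mul_norm_le_norm_sub_smul (hM _ hn) hγ.le
  obtain ⟨n, hn, hn₁⟩ := exists_mem_and_succ_notMem (u := fun n => x (t + n)) hxt hexit
  change x (t + n + 1) ∉ M at hn₁
  set c := γ ^ 2 * Lg ^ 2 - 3
  have hy : ‖x (t + n + 1) - xdag‖ ≤ r * √c := by
    rw [hstep, mul_comm]
    exact (norm_sub_smul_le_sqrt_mul_of_two_le (hM _ hn) (hgrad_le _) hγ.le hγμdag.le).trans
      (mul_le_mul_of_nonneg_left (hdiam _ hn _ hxdagM) (Real.sqrt_nonneg c))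
  obtain ⟨hP₁, hP₂⟩ := hP _ hn₁ hy
  refine ⟨n + 1, le_add_self, hn₁, Or.inr ?_⟩
  calc ‖x (t + n + 1 + 1) - xstar‖ ≤ √(1 - γ * μstar) * ‖x (t + n + 1) - xstar‖ := by
        rw [hstep]; exact norm_sub_smul_le_sqrt_mul_of_mul_sq_le hP₁ hP₂ hγ.le hγL
    _ ≤ ‖xdag - xstar‖ - r := by
      refine mul_le_sub_of_div_le (Real.sqrt_nonneg _) ((Real.sqrt_lt' one_pos).2 (by linarith))
        ((norm_sub_le_norm_sub_add_norm_sub _ xdag xstar).trans (add_le_add_left hy _)) ?_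
      rw [← Real.sqrt_mul' c (by linarith), norm_sub_rev]
      exact hdist

/-- full escape theorem: Under global L_g-smoothness, μ†-OPSC toward `x†`
inside `M` (of diameter `r`), L-smoothness and μ⋆-OPSC toward `x⋆` on the surrounding region
`P(M)`, the distance condition on `‖x⋆ - x†‖` and step size `2/μ† < γ ≤ μ⋆/L²`: if a GD
iterate `x_t ∈ M`, `x_t ≠ x†`, then GD escapes `M` and reaches a point with distance to
`x⋆` at most `‖x† - x⋆‖ - r`. -/
theorem stmt12 {d : ℕ} (Lg L μstar μdag γ r : ℝ)
    (hr : 0 < r) (hLg : 0 < Lg) (hL : 0 < L) (hLLg : L < Lg)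
    (hμstar : 0 < μstar) (hμL : μstar ≤ L)
    (hμdag : μdag > 2 * L ^ 2 / μstar)
    (hγ1 : 2 / μdag < γ) (hγ2 : γ ≤ μstar / L ^ 2)
    (f : EuclideanSpace ℝ (Fin d) → ℝ)
    (f' : EuclideanSpace ℝ (Fin d) → EuclideanSpace ℝ (Fin d))
    (M : Set (EuclideanSpace ℝ (Fin d)))
    (xdag xstar : EuclideanSpace ℝ (Fin d))
    (hxdagM : xdag ∈ M)
    (hgrad : ∀ x, HasGradientAt f (f' x) x)
    (hlipg : ∀ x y, ‖f' x - f' y‖ ≤ Lg * ‖x - y‖)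
    (hcritdag : f' xdag = 0) (hcritstar : f' xstar = 0)
    (hdiam : ∀ x ∈ M, ∀ y ∈ M, ‖x - y‖ ≤ r)
    -- conditions on the surrounding region P(M)
    (hP : ∀ x, x ∉ M → ‖x - xdag‖ ≤ r * Real.sqrt (γ ^ 2 * Lg ^ 2 - 3) →
        ⟪f' x, x - xstar⟫ ≥ μstar * ‖x - xstar‖ ^ 2 ∧ ‖f' x‖ ≤ L * ‖x - xstar‖)
    -- the (global) minimum is sufficiently far from M
    (hdist : ‖xstar - xdag‖ ≥
        r * (1 + Real.sqrt ((γ ^ 2 * Lg ^ 2 - 3) * (1 - γ * μstar))) /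
          (1 - Real.sqrt (1 - γ * μstar)))
    -- μ†-OPSC toward x† on M
    (hM : ∀ x ∈ M, ⟪f' x, x - xdag⟫ ≥ μdag * ‖x - xdag‖ ^ 2)
    (x : ℕ → EuclideanSpace ℝ (Fin d))
    (hiter : ∀ s, x (s + 1) = x s - γ • f' (x s))
    (t : ℕ) (hxt : x t ∈ M) (hne : x t ≠ xdag) :
    ∃ k : ℕ, 1 ≤ k ∧ x (t + k) ∉ M ∧
      (‖x (t + k) - xstar‖ ≤ ‖xdag - xstar‖ - r ∨
        ‖x (t + k + 1) - xstar‖ ≤ ‖xdag - xstar‖ - r) :=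
  stmt12_general Lg L μstar μdag γ r hμstar hμL hμdag hγ1 hγ2 f' M xdag xstar hxdagM hlipg hcritdag
    hdiam hP hdist hM x hiter t hxt hne
end

section
/- Let f : ℝ^d → ℝ be L-smooth with ∇f(x⋆)=0, μ⋆-OPSC toward x⋆ on ℝ^d \ X for a measurable set X, and twice continuously differentiable. Let W be the initialization set with r_W = sup{‖x - x⋆‖ : x ∈ W} and c_X = inf{‖x - x⋆‖ : x ∈ X}. If c_X > r_W and 0 < γ ≤ μ⋆/L² ≤ 1/(2L), then GD initialized anywhere in W never encounters X. -/
open scoped RealInnerProductSpace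

/-- With `f` L-smooth (`∇f(x⋆) = 0`), twice continuously differentiable, and
μ⋆-OPSC toward `x⋆` on `ℝ^d \ X`, if `r_W` bounds `‖x - x⋆‖` on `W`, `c_X` lower-bounds
`‖x - x⋆‖` on `X`, `c_X > r_W`, and `0 < γ ≤ μ⋆/L² ≤ 1/(2L)`, then GD started anywhere in
`W` never encounters `X`. -/
theorem stmt14 {d : ℕ} (L μstar γ rW cX : ℝ) (hL : 0 < L) (hμ : 0 < μstar)
    (hγ : 0 < γ) (hγ1 : γ ≤ μstar / L ^ 2) (hγ2 : μstar / L ^ 2 ≤ 1 / (2 * L))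
    (f : EuclideanSpace ℝ (Fin d) → ℝ)
    (f' : EuclideanSpace ℝ (Fin d) → EuclideanSpace ℝ (Fin d))
    (hf : ContDiff ℝ 2 f)
    (xstar : EuclideanSpace ℝ (Fin d))
    (W X : Set (EuclideanSpace ℝ (Fin d)))
    (hgrad : ∀ x, HasGradientAt f (f' x) x)
    (hlip : ∀ x y, ‖f' x - f' y‖ ≤ L * ‖x - y‖)
    (hcrit : f' xstar = 0)
    (hopsc : ∀ x ∉ X, ⟪f' x, x - xstar⟫ ≥ μstar * ‖x - xstar‖ ^ 2)
    (hrW : ∀ w ∈ W, ‖w - xstar‖ ≤ rW)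
    (hcX : ∀ z ∈ X, cX ≤ ‖z - xstar‖)
    (hsep : rW < cX)
    (x : ℕ → EuclideanSpace ℝ (Fin d))
    (hiter : ∀ t, x (t + 1) = x t - γ • f' (x t))
    (hx0 : x 0 ∈ W) :
    ∀ t : ℕ, x t ∉ X := by
  have key : ∀ t : ℕ, ‖x t - xstar‖ ≤ rW ∧ x t ∉ X := by
    intro t
    induction t with
    | zero =>
      have h0 : ‖x 0 - xstar‖ ≤ rW := hrW _ hx0
      exact ⟨h0, fun hX => absurd (le_trans (hcX _ hX) h0) (not_le.mpr hsep)⟩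
    | succ t ih =>
      obtain ⟨hnorm, hnotX⟩ := ih
      set v := x t - xstar with hv
      set g := f' (x t) with hg
      have hgb : ‖g‖ ≤ L * ‖v‖ := by
        have := hlip (x t) xstar
        simpa [hg, hv, hcrit] using this
      have hip : ⟪g, v⟫ ≥ μstar * ‖v‖ ^ 2 := hopsc _ hnotX
      have hsq : ‖x (t + 1) - xstar‖ ^ 2 ≤ ‖v‖ ^ 2 := by
        have heq : x (t + 1) - xstar = v - γ • g := by
          rw [hiter t]; simp only [hv, hg]; abel
        rw [heq]
        have hexp : ‖v - γ • g‖ ^ 2 = ‖v‖ ^ 2 - 2 * γ * ⟪g, v⟫ + γ ^ 2 * ‖g‖ ^ 2 := by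
          rw [norm_sub_sq_real, real_inner_smul_right, norm_smul, real_inner_comm]
          simp [abs_of_pos hγ]
          ring
        rw [hexp]
        have hg2 : γ ^ 2 * ‖g‖ ^ 2 ≤ γ ^ 2 * (L * ‖v‖) ^ 2 := by
          apply mul_le_mul_of_nonneg_left _ (sq_nonneg γ)
          exact pow_le_pow_left₀ (norm_nonneg g) hgb 2
        have hγL : γ * L ^ 2 ≤ μstar := (le_div_iff₀ (by positivity : (0:ℝ) < L ^ 2)).mp hγ1
        have h1 : γ ^ 2 * (L * ‖v‖) ^ 2 ≤ γ * (μstar * ‖v‖ ^ 2) := by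
          have := mul_le_mul_of_nonneg_right hγL (mul_nonneg hγ.le (sq_nonneg ‖v‖))
          nlinarith [this]
        have h2 : γ * (μstar * ‖v‖ ^ 2) ≤ γ * ⟪g, v⟫ := mul_le_mul_of_nonneg_left hip hγ.le
        have h0 : (0:ℝ) ≤ γ * (μstar * ‖v‖ ^ 2) := by positivity
        linarith
      have hnorm' : ‖x (t + 1) - xstar‖ ≤ ‖v‖ := by
        nlinarith [norm_nonneg (x (t + 1) - xstar), norm_nonneg v, hsq]
      have hle : ‖x (t + 1) - xstar‖ ≤ rW := le_trans hnorm' hnorm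
      exact ⟨hle, fun hX => absurd (le_trans (hcX _ hX) hle) (not_le.mpr hsep)⟩
  exact fun t => (key t).2
end
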